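/- Let N ≥ 1, α > 0, δ > 0, C₁ ≥ 0, T₀ > 0, and let Ω ⊂ ℝ^N be open with {|x| < δ} ⊂ Ω. Let U : (0,T₀) × Ω → ℝ be continuously differentiable in x and satisfy |U(t,x)|^α ≤ C₁ min{t^{-1}, |x|^{-2}} on (0,T₀) × Ω and |∇U(t,x)|^α ≤ C₁ on (0,T₀) × (Ω ∩ {|x| > δ}). Let Ψ ∈ C²(ℝ^N) ∩ W^{2,∞}(ℝ^N) with 0 ≤ Ψ ≤ 1 and Ψ(x) = 1 for |x| < δ. For K > 0 and an integer m ≥ 2 set Θ(t,x) = K ( t^{m/2} + Σ_{j=1}^{m} t^{(j-1)/2} χ_j(x) ), and set h(s,x) = (|x|^{-2} + 1) Σ_{j=1}^{m} s^{(j-1)/2} χ_j(x) + (1+s) s^{(m-2)/2}. For w : (0,T) × Ω → ℝ define (Mw)(t,x) = 2∇U·∇Ψ + UΔΨ + |ΨU + w|^α (ΨU + w) − Ψ|U|^α U. Then there is a constant A, depending only on N, α, δ, C₁ and ‖Ψ‖_{W^{2,∞}} (in particular independent of T, m, K, w, z), such that for every 0 < T ≤ min{1/4, T₀}, every K > 0,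 every integer m ≥ 2, and all w, z ∈ L^∞((0,T) × Ω) with |w| ≤ Θ and |z| ≤ Θ pointwise: (i) |Mw| ≤ A(1 + K^{α+1}) h pointwise on (0,T) × Ω (so in particular Mw ∈ L^∞((0,T) × Ω)); (ii) |Mw − Mz| ≤ A(1 + K^{α+1}) |(w − z)/Θ| h pointwise on (0,T) × Ω. -/

import Mathlib

open MeasureTheory Real Set Filter ENNReal

open Topology

/-- `a_j = 2^{-j} δ`. -/
noncomputable def aCoef (δ : ℝ) (j : ℕ) : ℝ := 2 ^ (-(j : ℝ)) * δ

/-- The cutoff function `χ_j(x) = θ(|x|/a_j)`. -/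
noncomputable def cut (θ : ℝ → ℝ) (δ : ℝ) (j : ℕ) {N : ℕ}
    (x : EuclideanSpace ℝ (Fin N)) : ℝ :=
  θ (‖x‖ / aCoef δ j)

/-- `Θ(t,x) = K (t^{m/2} + Σ_{j=1}^{m} t^{(j-1)/2} χ_j(x))`. -/
noncomputable def ThetaFun (θ : ℝ → ℝ) (δ K : ℝ) (m : ℕ) {N : ℕ} (t : ℝ)
    (x : EuclideanSpace ℝ (Fin N)) : ℝ :=
  K * (t ^ ((m : ℝ) / 2) + ∑ j ∈ Finset.Icc 1 m, t ^ (((j : ℝ) - 1) / 2) * cut θ δ j x)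

/-- `h(s,x) = (|x|^{-2} + 1) Σ_{j=1}^{m} s^{(j-1)/2} χ_j(x) + (1+s) s^{(m-2)/2}`. -/
noncomputable def hFun (θ : ℝ → ℝ) (δ : ℝ) (m : ℕ) {N : ℕ} (s : ℝ)
    (x : EuclideanSpace ℝ (Fin N)) : ℝ :=
  (‖x‖ ^ (-(2 : ℝ)) + 1) * (∑ j ∈ Finset.Icc 1 m, s ^ (((j : ℝ) - 1) / 2) * cut θ δ j x) +
    (1 + s) * s ^ (((m : ℝ) - 2) / 2)

/-- The Laplacian of `f : ℝ^N → ℝ`, as the sum of the pure second partial derivatives. -/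
noncomputable def lap (N : ℕ) (f : EuclideanSpace ℝ (Fin N) → ℝ)
    (x : EuclideanSpace ℝ (Fin N)) : ℝ :=
  ∑ i : Fin N, iteratedFDeriv ℝ 2 f x ![EuclideanSpace.single i 1, EuclideanSpace.single i 1]

/-- `(Mw)(t,x) = 2∇U·∇Ψ + UΔΨ + |ΨU + w|^α (ΨU + w) − Ψ|U|^α U`. -/
noncomputable def Mop (N : ℕ) (α : ℝ) (U : ℝ → EuclideanSpace ℝ (Fin N) → ℝ)
    (Ψ : EuclideanSpace ℝ (Fin N) → ℝ) (w : ℝ → EuclideanSpace ℝ (Fin N) → ℝ)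
    (t : ℝ) (x : EuclideanSpace ℝ (Fin N)) : ℝ :=
  2 * (inner ℝ (gradient (U t) x) (gradient Ψ x) : ℝ) + U t x * lap N Ψ x +
    |Ψ x * U t x + w t x| ^ α * (Ψ x * U t x + w t x) - Ψ x * (|U t x| ^ α * U t x)

lemma myRootLe {a c α : ℝ} (hα : 0 < α) (ha : 0 ≤ a) (h : a ^ α ≤ c) : a ≤ c ^ α⁻¹ := by
  have h2 : (a ^ α) ^ α⁻¹ ≤ c ^ α⁻¹ :=
    Real.rpow_le_rpow (Real.rpow_nonneg ha α) h (inv_nonneg.2 hα.le)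
  rwa [Real.rpow_rpow_inv ha hα.ne'] at h2

lemma myHasDerivAt {α : ℝ} (hα : 0 < α) (u : ℝ) :
    HasDerivAt (fun v : ℝ => |v| ^ α * v) ((α + 1) * |u| ^ α) u := by
  rcases eq_or_ne u 0 with rfl | hu
  · have h0 : (α + 1) * |(0 : ℝ)| ^ α = 0 := by
      simp [Real.zero_rpow hα.ne']
    rw [h0, hasDerivAt_iff_tendsto_slope]
    have hev : slope (fun v : ℝ => |v| ^ α * v) 0 =ᶠ[𝓝[≠] (0 : ℝ)] fun v => |v| ^ α := by
      filter_upwards [self_mem_nhdsWithin] with v hv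
      have hv' : v ≠ 0 := hv
      simp [slope_def_field, Real.zero_rpow hα.ne', mul_div_assoc, div_self hv']
    rw [tendsto_congr' hev]
    have hc : ContinuousAt (fun v : ℝ => |v| ^ α) 0 := by
      have h1 : ContinuousAt (fun y : ℝ => y ^ α) (|(0:ℝ)|) :=
        Real.continuousAt_rpow_const _ _ (Or.inr hα.le)
      exact h1.comp continuous_abs.continuousAt
    have h2 := hc.tendsto
    simp only [abs_zero, Real.zero_rpow hα.ne'] at h2
    exact h2.mono_left nhdsWithin_le_nhds
  · have h1 : HasDerivAt (fun v : ℝ => |v| ^ α)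
        (α * |u| ^ (α - 1) * (SignType.sign u : ℝ)) u :=
      (Real.hasDerivAt_rpow_const (Or.inl (abs_ne_zero.2 hu))).comp u (hasDerivAt_abs hu)
    have h2 := h1.mul (hasDerivAt_id u)
    have h3 : α * |u| ^ (α - 1) * (SignType.sign u : ℝ) * u + |u| ^ α * 1
        = (α + 1) * |u| ^ α := by
      have hsu : (SignType.sign u : ℝ) * u = |u| := sign_mul_self u
      have habs : |u| ^ (α - 1) * |u| = |u| ^ α := by
        rw [← Real.rpow_add_one (abs_ne_zero.2 hu)]
        ring_nf
      calc α * |u| ^ (α - 1) * (SignType.sign u : ℝ) * u + |u| ^ α * 1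
          = α * (|u| ^ (α - 1) * ((SignType.sign u : ℝ) * u)) + |u| ^ α := by ring
        _ = α * (|u| ^ (α - 1) * |u|) + |u| ^ α := by rw [hsu]
        _ = α * |u| ^ α + |u| ^ α := by rw [habs]
        _ = (α + 1) * |u| ^ α := by ring
    exact h3 ▸ h2

lemma myMVF {α : ℝ} (hα : 0 < α) {a b M : ℝ} (ha : |a| ≤ M) (hb : |b| ≤ M) :
    |(|a| ^ α * a - |b| ^ α * b)| ≤ (α + 1) * M ^ α * |a - b| := by
  have hM0 : 0 ≤ M := (abs_nonneg a).trans ha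
  have key := Convex.norm_image_sub_le_of_norm_hasDerivWithin_le
    (f := fun v : ℝ => |v| ^ α * v) (f' := fun v : ℝ => (α + 1) * |v| ^ α)
    (s := Set.uIcc a b)
    (fun u _ => (myHasDerivAt hα u).hasDerivWithinAt)
    (fun u hu => by
      have h1 : |u| ≤ M := by
        rcases Set.mem_uIcc.mp hu with ⟨h1, h2⟩ | ⟨h1, h2⟩ <;>
          rcases abs_le.mp ha with ⟨ha1, ha2⟩ <;>
          rcases abs_le.mp hb with ⟨hb1, hb2⟩ <;>
          exact abs_le.2 ⟨by linarith, by linarith⟩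
      have h2 : |u| ^ α ≤ M ^ α := Real.rpow_le_rpow (abs_nonneg u) h1 hα.le
      rw [Real.norm_eq_abs, abs_of_nonneg (by positivity)]
      exact mul_le_mul_of_nonneg_left h2 (by linarith))
    (convex_uIcc a b) (Set.right_mem_uIcc) (Set.left_mem_uIcc)
  simpa [Real.norm_eq_abs] using key

lemma myFinal1 {F A Acore Kp h : ℝ} (hF : F ≤ Acore * (1 + Kp) * h)
    (hA : Acore ≤ A) (hKp : 0 ≤ Kp) (hh : 0 ≤ h) : F ≤ A * (1 + Kp) * h := by
  nlinarith [mul_le_mul_of_nonneg_right hA (mul_nonneg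
    (by linarith : (0:ℝ) ≤ 1 + Kp) hh), hF]

lemma myFinal2 {X A Acore Kp h q : ℝ} (hX : X ≤ Acore * (1 + Kp) * h * q)
    (hA : Acore ≤ A) (hKp : 0 ≤ Kp) (hh : 0 ≤ h) (hq : 0 ≤ q) :
    X ≤ A * (1 + Kp) * q * h := by
  nlinarith [mul_le_mul_of_nonneg_right hA (mul_nonneg (mul_nonneg
    (by linarith : (0:ℝ) ≤ 1 + Kp) hh) hq)]

lemma myFinal3 {MW L F C A Acore B Kp h : ℝ}
    (htri : MW ≤ L + F + C) (hLC : L + C ≤ B) (hB : B = A - 1 - Acore)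
    (hB0 : 0 ≤ B) (hF : F ≤ Acore * (1 + Kp) * h) (hKp : 0 ≤ Kp) (hh1 : 1 ≤ h) :
    MW ≤ A * (1 + Kp) * h := by
  have h1 : 1 ≤ (1 + Kp) * h := by nlinarith
  nlinarith [mul_le_mul_of_nonneg_left h1 hB0]

set_option maxHeartbeats 2000000

/-- Lemma 4.4.  There is a constant `A` depending only on
`N, α, δ, C₁` and the `W^{2,∞}` norm bound `CΨ` for `Ψ` (in particular independent of
`T, m, K, w, z`) such that for all `w, z` with `|w| ≤ Θ`, `|z| ≤ Θ`:
(i) `|Mw| ≤ A(1+K^{α+1}) h` and (ii) `|Mw − Mz| ≤ A(1+K^{α+1}) |(w−z)/Θ| h`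
pointwise on `(0,T) × Ω`. -/
theorem stmt6 (N : ℕ) (hN : 1 ≤ N) (α δ C₁ CΨ : ℝ) (hα : 0 < α) (hδ : 0 < δ)
    (hC₁ : 0 ≤ C₁)
    (θ : ℝ → ℝ) (hθsmooth : ContDiff ℝ (⊤ : ℕ∞) θ) (hθmono : Monotone θ)
    (hθ0 : ∀ s ≤ (1 : ℝ), θ s = 0) (hθ1 : ∀ s : ℝ, 2 ≤ s → θ s = 1) :
    ∃ A > (0 : ℝ),
      ∀ (Ψ : EuclideanSpace ℝ (Fin N) → ℝ), ContDiff ℝ 2 Ψ →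
        (∀ x, 0 ≤ Ψ x ∧ Ψ x ≤ 1) →
        (∀ x, ‖x‖ < δ → Ψ x = 1) →
        (∀ x, |Ψ x| + ‖gradient Ψ x‖ + ‖iteratedFDeriv ℝ 2 Ψ x‖ ≤ CΨ) →
      ∀ (Ω : Set (EuclideanSpace ℝ (Fin N))), IsOpen Ω → Metric.ball 0 δ ⊆ Ω →
      ∀ T₀ > (0 : ℝ), ∀ U : ℝ → EuclideanSpace ℝ (Fin N) → ℝ,
        (∀ t ∈ Ioo 0 T₀, ContDiffOn ℝ 1 (U t) Ω) →
        (∀ t ∈ Ioo 0 T₀, ∀ x ∈ Ω, |U t x| ^ α ≤ C₁ * min t⁻¹ (‖x‖ ^ (-(2 : ℝ)))) →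
        (∀ t ∈ Ioo 0 T₀, ∀ x ∈ Ω, δ < ‖x‖ → ‖gradient (U t) x‖ ^ α ≤ C₁) →
      ∀ T : ℝ, 0 < T → T ≤ min (1 / 4) T₀ →
      ∀ K > (0 : ℝ), ∀ m : ℕ, 2 ≤ m →
      ∀ w z : ℝ → EuclideanSpace ℝ (Fin N) → ℝ,
        (∀ t ∈ Ioo 0 T, ∀ x ∈ Ω, |w t x| ≤ ThetaFun θ δ K m t x) →
        (∀ t ∈ Ioo 0 T, ∀ x ∈ Ω, |z t x| ≤ ThetaFun θ δ K m t x) →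
        (∀ t ∈ Ioo 0 T, ∀ x ∈ Ω,
          |Mop N α U Ψ w t x| ≤ A * (1 + K ^ (α + 1)) * hFun θ δ m t x) ∧
        (∀ t ∈ Ioo 0 T, ∀ x ∈ Ω,
          |Mop N α U Ψ w t x - Mop N α U Ψ z t x| ≤
            A * (1 + K ^ (α + 1)) *
              |(w t x - z t x) / ThetaFun θ δ K m t x| * hFun θ δ m t x) := by
  have hθnn : ∀ s, 0 ≤ θ s := fun s => by
    calc (0 : ℝ) = θ (min s 1) := (hθ0 _ (min_le_right _ _)).symm
      _ ≤ θ s := hθmono (min_le_left _ _)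
  have hθle1 : ∀ s, θ s ≤ 1 := fun s => by
    calc θ s ≤ θ (max s 2) := hθmono (le_max_left _ _)
      _ = 1 := hθ1 _ (le_max_right _ _)
  have hc2 : (0:ℝ) < 2 ^ α := Real.rpow_pos_of_pos (by norm_num) α
  have hc3 : (0:ℝ) < 3 ^ α := Real.rpow_pos_of_pos (by norm_num) α
  obtain ⟨E, hEdef⟩ : ∃ E : ℝ, E = C₁ * (δ ^ 2)⁻¹ := ⟨_, rfl⟩
  have hE0 : 0 ≤ E := by rw [hEdef]; positivity
  obtain ⟨D, hDdef⟩ : ∃ D : ℝ, D = E ^ α⁻¹ := ⟨_, rfl⟩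
  have hD0 : 0 ≤ D := hDdef ▸ Real.rpow_nonneg hE0 _
  obtain ⟨Acore, hAcdef⟩ : ∃ Ac : ℝ, Ac = (α + 1) * 2 ^ α * (C₁ + 3 ^ α) := ⟨_, rfl⟩
  have hAc0 : 0 < Acore := by
    rw [hAcdef]; apply _root_.mul_pos (_root_.mul_pos (by linarith) hc2); linarith
  have hC₁r0 : 0 ≤ C₁ ^ α⁻¹ := Real.rpow_nonneg hC₁ _
  obtain ⟨A, hAdef⟩ : ∃ A : ℝ,
      A = 1 + 2 * (C₁ ^ α⁻¹ * |CΨ|) + (N : ℝ) * |CΨ| * D + 2 * (E * D) + Acore := ⟨_, rfl⟩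
  have hA0 : 0 < A := by
    have h1 : 0 ≤ 2 * (C₁ ^ α⁻¹ * |CΨ|) := by positivity
    have h2 : 0 ≤ (N : ℝ) * |CΨ| * D := by positivity
    have h3 : 0 ≤ 2 * (E * D) := by positivity
    linarith
  refine ⟨A, hA0, ?_⟩
  intro Ψ hΨ hΨ01 hΨball hΨnorm Ω hΩopen hΩball T₀ hT₀ U hUdiff hUbd hUgrad
    T hT hTle K hK m hm w z hw hz
  -- basic Ψ facts
  have hCΨgrad : ∀ x, ‖gradient Ψ x‖ ≤ |CΨ| := by
    intro x
    have h1 := hΨnorm x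
    have h2 := abs_nonneg (Ψ x)
    have h3 := norm_nonneg (iteratedFDeriv ℝ 2 Ψ x)
    have h4 := le_abs_self CΨ
    linarith
  have hCΨ2 : ∀ x, ‖iteratedFDeriv ℝ 2 Ψ x‖ ≤ |CΨ| := by
    intro x
    have h1 := hΨnorm x
    have h2 := abs_nonneg (Ψ x)
    have h3 := norm_nonneg (gradient Ψ x)
    have h4 := le_abs_self CΨ
    linarith
  have hΨcb : ∀ x : EuclideanSpace ℝ (Fin N), ‖x‖ ≤ δ → Ψ x = 1 := by
    intro x hx
    have hcl : IsClosed {y : EuclideanSpace ℝ (Fin N) | Ψ y = 1} :=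
      isClosed_eq (hΨ.continuous) continuous_const
    have hsub : Metric.ball (0 : EuclideanSpace ℝ (Fin N)) δ ⊆ {y | Ψ y = 1} := fun y hy =>
      hΨball y (by simpa [mem_ball_zero_iff] using hy)
    have hcls := closure_ball (0 : EuclideanSpace ℝ (Fin N)) hδ.ne'
    have hsub2 : Metric.closedBall (0 : EuclideanSpace ℝ (Fin N)) δ ⊆ {y | Ψ y = 1} := by
      rw [← hcls]
      exact hcl.closure_subset_iff.2 hsub
    exact hsub2 (mem_closedBall_zero_iff.2 hx)
  have hgradΨ0 : ∀ x : EuclideanSpace ℝ (Fin N), ‖x‖ ≤ δ → gradient Ψ x = 0 := by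
    intro x hx
    have hmax : IsLocalMax Ψ x :=
      Filter.Eventually.of_forall (fun y => by rw [hΨcb x hx]; exact (hΨ01 y).2)
    have hf := hmax.fderiv_eq_zero
    unfold gradient
    rw [hf, map_zero]
  have hlapΨ0 : ∀ x : EuclideanSpace ℝ (Fin N), ‖x‖ < δ → lap N Ψ x = 0 := by
    intro x hx
    have hxball : x ∈ Metric.ball (0 : EuclideanSpace ℝ (Fin N)) δ := by
      simpa [mem_ball_zero_iff] using hx
    have hev : Ψ =ᶠ[𝓝 x] fun _ => (1 : ℝ) := by
      filter_upwards [Metric.isOpen_ball.mem_nhds hxball] with y hy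
      exact hΨball y (mem_ball_zero_iff.1 hy)
    have h2 : iteratedFDeriv ℝ 2 Ψ x = 0 := by
      rw [← iteratedFDerivWithin_univ,
        Filter.EventuallyEq.iteratedFDerivWithin_eq (hev.filter_mono nhdsWithin_le_nhds)
          hev.eq_of_nhds 2, iteratedFDerivWithin_univ,
        iteratedFDeriv_const_of_ne two_ne_zero]
      rfl
    simp [lap, h2]
  -- cut function facts
  have hcut1 : ∀ x : EuclideanSpace ℝ (Fin N), δ ≤ ‖x‖ → cut θ δ 1 x = 1 := by
    intro x hx
    have ha : aCoef δ 1 = δ / 2 := by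
      rw [aCoef, show -((1:ℕ):ℝ) = (-1 : ℝ) by norm_num, Real.rpow_neg_one]
      ring
    rw [cut, ha]
    apply hθ1
    rw [le_div_iff₀ (by positivity)]
    linarith
  have hKp0 : 0 ≤ K ^ (α + 1) := Real.rpow_nonneg hK.le _
  have hKle : K ≤ 1 + K ^ (α + 1) := by
    rcases le_total K 1 with h | h
    · linarith
    · have h2 := Real.rpow_le_rpow_of_exponent_le h (by linarith : (1:ℝ) ≤ α + 1)
      rw [Real.rpow_one] at h2
      linarith
  have hsum2 : ∀ (x : EuclideanSpace ℝ (Fin N)) (t : ℝ), 0 < t → t ≤ 1/4 →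
      (∑ j ∈ Finset.Icc 1 m, t ^ (((j:ℝ) - 1)/2) * cut θ δ j x) ≤ 2 := by
    intro x t ht0 ht4
    have hterm : ∀ j ∈ Finset.Icc 1 m,
        t ^ (((j:ℝ) - 1)/2) * cut θ δ j x ≤ (1/2 : ℝ)^(j-1) := by
      intro j hj
      have hj1 : 1 ≤ j := (Finset.mem_Icc.mp hj).1
      have hcast : ((j:ℝ) - 1) = ((j - 1 : ℕ) : ℝ) := by
        rw [Nat.cast_sub hj1, Nat.cast_one]
      have h1 : t ^ (((j:ℝ) - 1)/2) ≤ (1/2 : ℝ)^(j-1) := by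
        rw [hcast]
        calc t ^ (((j-1:ℕ):ℝ)/2) ≤ (1/4 : ℝ) ^ (((j-1:ℕ):ℝ)/2) :=
              Real.rpow_le_rpow ht0.le ht4 (by positivity)
          _ = (1/2 : ℝ)^(j-1) := by
              rw [show (1/4 : ℝ) = (1/2 : ℝ)^(2:ℕ) by norm_num,
                ← Real.rpow_natCast (1/2 : ℝ) 2,
                ← Real.rpow_mul (by norm_num : (0:ℝ) ≤ 1/2),
                show ((2:ℕ):ℝ) * (((j-1:ℕ):ℝ)/2) = ((j-1:ℕ):ℝ) by push_cast; ring,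
                Real.rpow_natCast]
      have hcnn := hθnn (‖x‖ / aCoef δ j)
      have hcle := hθle1 (‖x‖ / aCoef δ j)
      have htnn : 0 ≤ t ^ (((j:ℝ) - 1)/2) := Real.rpow_nonneg ht0.le _
      have h2 : t ^ (((j:ℝ) - 1)/2) * cut θ δ j x ≤ t ^ (((j:ℝ) - 1)/2) := by
        rw [cut]
        nlinarith
      linarith
    calc (∑ j ∈ Finset.Icc 1 m, t ^ (((j:ℝ) - 1)/2) * cut θ δ j x)
        ≤ ∑ j ∈ Finset.Icc 1 m, (1/2 : ℝ)^(j-1) := Finset.sum_le_sum hterm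
      _ = ∑ i ∈ Finset.range m, (1/2 : ℝ)^i := by
          rw [← Finset.Ico_add_one_right_eq_Icc, Finset.sum_Ico_eq_sum_range]
          simp
      _ ≤ 2 := sum_geometric_two_le m
  have core : ∀ t ∈ Ioo 0 T, ∀ x ∈ Ω,
      0 < ThetaFun θ δ K m t x ∧ 0 ≤ hFun θ δ m t x ∧
      (α + 1) * (|U t x| + ThetaFun θ δ K m t x) ^ α * ThetaFun θ δ K m t x ≤
        Acore * (1 + K ^ (α + 1)) * hFun θ δ m t x ∧
      (δ ≤ ‖x‖ → 1 ≤ hFun θ δ m t x) := by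
    intro t ht x hx
    obtain ⟨ht0, htT⟩ := ht
    have ht4 : t ≤ 1/4 := le_of_lt (lt_of_lt_of_le htT (hTle.trans (min_le_left _ _)))
    have htT₀ : t < T₀ := lt_of_lt_of_le htT (hTle.trans (min_le_right _ _))
    obtain ⟨S, hSdef⟩ : ∃ S : ℝ,
        S = ∑ j ∈ Finset.Icc 1 m, t ^ (((j:ℝ) - 1)/2) * cut θ δ j x := ⟨_, rfl⟩
    have hS0 : 0 ≤ S := hSdef ▸ Finset.sum_nonneg fun j _ =>
      mul_nonneg (Real.rpow_nonneg ht0.le _) (hθnn _)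
    have hS2 : S ≤ 2 := hSdef ▸ hsum2 x t ht0 ht4
    obtain ⟨P, hPdef⟩ : ∃ P : ℝ, P = t ^ (((m:ℝ) - 2)/2) := ⟨_, rfl⟩
    have hP0 : 0 < P := hPdef ▸ Real.rpow_pos_of_pos ht0 _
    obtain ⟨R, hRdef⟩ : ∃ R : ℝ, R = ‖x‖ ^ (-(2:ℝ)) := ⟨_, rfl⟩
    have hR0 : 0 ≤ R := hRdef ▸ Real.rpow_nonneg (norm_nonneg x) _
    have htm : t ^ ((m:ℝ)/2) = t * P := by
      rw [hPdef, show (m:ℝ)/2 = 1 + ((m:ℝ) - 2)/2 by ring, Real.rpow_add ht0, Real.rpow_one]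
    have htm1 : t * P ≤ 1 := by
      rw [← htm]
      exact Real.rpow_le_one ht0.le (by linarith) (by positivity)
    have hΘeq : ThetaFun θ δ K m t x = K * (t * P + S) := by
      rw [ThetaFun, htm, hSdef]
    have hheq : hFun θ δ m t x = (R + 1) * S + (1 + t) * P := by
      rw [hFun, hSdef, hPdef, hRdef]
    have hΘpos : 0 < ThetaFun θ δ K m t x := by
      rw [hΘeq]
      have := _root_.mul_pos ht0 hP0
      apply _root_.mul_pos hK
      linarith
    have hh0 : 0 ≤ hFun θ δ m t x := by
      rw [hheq]
      nlinarith [mul_nonneg hR0 hS0, _root_.mul_pos ht0 hP0]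
    have hΘ3K : ThetaFun θ δ K m t x ≤ 3 * K := by
      rw [hΘeq]
      nlinarith
    have hΘKh : ThetaFun θ δ K m t x ≤ K * hFun θ δ m t x := by
      rw [hΘeq, hheq]
      nlinarith [mul_nonneg hR0 hS0]
    have hUb := hUbd t ⟨ht0, htT₀⟩ x hx
    rw [← hRdef] at hUb
    have hUa0 : 0 ≤ |U t x| ^ α := Real.rpow_nonneg (abs_nonneg _) _
    have hU1 : |U t x| ^ α ≤ C₁ * t⁻¹ :=
      le_trans hUb (mul_le_mul_of_nonneg_left (min_le_left _ _) hC₁)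
    have hU2 : |U t x| ^ α ≤ C₁ * R :=
      le_trans hUb (mul_le_mul_of_nonneg_left (min_le_right _ _) hC₁)
    have hUΘ : |U t x| ^ α * ThetaFun θ δ K m t x ≤ C₁ * (K * hFun θ δ m t x) := by
      rw [hΘeq, hheq]
      have e1 : |U t x| ^ α * (t * P) ≤ C₁ * P := by
        have h5 := mul_le_mul_of_nonneg_right hU1 (le_of_lt (_root_.mul_pos ht0 hP0))
        have h6 : C₁ * t⁻¹ * (t * P) = C₁ * P := by
          calc C₁ * t⁻¹ * (t * P) = C₁ * (t⁻¹ * t) * P := by ring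
            _ = C₁ * P := by rw [inv_mul_cancel₀ ht0.ne', mul_one]
        linarith [h6 ▸ h5]
      have e2 : |U t x| ^ α * S ≤ C₁ * (R * S) := by
        have h5 := mul_le_mul_of_nonneg_right hU2 hS0
        calc |U t x| ^ α * S ≤ C₁ * R * S := h5
          _ = C₁ * (R * S) := by ring
      nlinarith [mul_le_mul_of_nonneg_left e1 hK.le, mul_le_mul_of_nonneg_left e2 hK.le,
        mul_nonneg (mul_nonneg hK.le hC₁) hS0,
        mul_nonneg (mul_nonneg hK.le hC₁) (mul_nonneg ht0.le hP0.le)]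
    have hΘa0 : 0 ≤ (ThetaFun θ δ K m t x) ^ α := Real.rpow_nonneg hΘpos.le _
    have hsplit : (|U t x| + ThetaFun θ δ K m t x) ^ α ≤
        2 ^ α * (|U t x| ^ α + (ThetaFun θ δ K m t x) ^ α) := by
      rcases le_total (|U t x|) (ThetaFun θ δ K m t x) with hle | hle
      · calc (|U t x| + ThetaFun θ δ K m t x) ^ α
            ≤ (2 * ThetaFun θ δ K m t x) ^ α := by
              apply Real.rpow_le_rpow (by positivity) (by linarith) hα.le
          _ = 2 ^ α * (ThetaFun θ δ K m t x) ^ α := Real.mul_rpow (by norm_num) hΘpos.le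
          _ ≤ 2 ^ α * (|U t x| ^ α + (ThetaFun θ δ K m t x) ^ α) := by nlinarith
      · calc (|U t x| + ThetaFun θ δ K m t x) ^ α
            ≤ (2 * |U t x|) ^ α := by
              apply Real.rpow_le_rpow (by positivity) (by linarith) hα.le
          _ = 2 ^ α * |U t x| ^ α := Real.mul_rpow (by norm_num) (abs_nonneg _)
          _ ≤ 2 ^ α * (|U t x| ^ α + (ThetaFun θ δ K m t x) ^ α) := by nlinarith
    have hΘα : (ThetaFun θ δ K m t x) ^ α * ThetaFun θ δ K m t x ≤
        3 ^ α * K ^ (α + 1) * hFun θ δ m t x := by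
      have h7 : (ThetaFun θ δ K m t x) ^ α ≤ 3 ^ α * K ^ α := by
        calc (ThetaFun θ δ K m t x) ^ α ≤ (3 * K) ^ α :=
              Real.rpow_le_rpow hΘpos.le hΘ3K hα.le
          _ = 3 ^ α * K ^ α := Real.mul_rpow (by norm_num) hK.le
      have h8 : K ^ α * K = K ^ (α + 1) := by rw [Real.rpow_add hK, Real.rpow_one]
      calc (ThetaFun θ δ K m t x) ^ α * ThetaFun θ δ K m t x
          ≤ (3 ^ α * K ^ α) * (K * hFun θ δ m t x) := by
            apply mul_le_mul h7 hΘKh hΘpos.le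
            positivity
        _ = 3 ^ α * (K ^ α * K) * hFun θ δ m t x := by ring
        _ = 3 ^ α * K ^ (α + 1) * hFun θ δ m t x := by rw [h8]
    refine ⟨hΘpos, hh0, ?_, ?_⟩
    · calc (α + 1) * (|U t x| + ThetaFun θ δ K m t x) ^ α * ThetaFun θ δ K m t x
          ≤ (α + 1) * (2 ^ α * (|U t x| ^ α + (ThetaFun θ δ K m t x) ^ α)) *
              ThetaFun θ δ K m t x := by
            apply mul_le_mul_of_nonneg_right
              (mul_le_mul_of_nonneg_left hsplit (by linarith)) hΘpos.le
        _ = (α + 1) * 2 ^ α * (|U t x| ^ α * ThetaFun θ δ K m t x +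
              (ThetaFun θ δ K m t x) ^ α * ThetaFun θ δ K m t x) := by ring
        _ ≤ (α + 1) * 2 ^ α * (C₁ * (K * hFun θ δ m t x) +
              3 ^ α * K ^ (α + 1) * hFun θ δ m t x) := by
            apply mul_le_mul_of_nonneg_left (add_le_add hUΘ hΘα)
              (mul_nonneg (by linarith) hc2.le)
        _ ≤ (α + 1) * 2 ^ α * (C₁ * ((1 + K ^ (α + 1)) * hFun θ δ m t x) +
              3 ^ α * ((1 + K ^ (α + 1)) * hFun θ δ m t x)) := by
            apply mul_le_mul_of_nonneg_left _ (mul_nonneg (by linarith) hc2.le)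
            have e3 : C₁ * (K * hFun θ δ m t x) ≤
                C₁ * ((1 + K ^ (α + 1)) * hFun θ δ m t x) :=
              mul_le_mul_of_nonneg_left (mul_le_mul_of_nonneg_right hKle hh0) hC₁
            have e4 : 3 ^ α * K ^ (α + 1) * hFun θ δ m t x ≤
                3 ^ α * ((1 + K ^ (α + 1)) * hFun θ δ m t x) := by
              have e5 : K ^ (α + 1) * hFun θ δ m t x ≤
                  (1 + K ^ (α + 1)) * hFun θ δ m t x :=
                mul_le_mul_of_nonneg_right (by linarith) hh0
              nlinarith
            linarith
        _ = Acore * (1 + K ^ (α + 1)) * hFun θ δ m t x := by rw [hAcdef]; ring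
    · intro hxδ
      have hS1 : (1:ℝ) ≤ S := by
        have h1m : (1:ℕ) ∈ Finset.Icc 1 m := Finset.mem_Icc.mpr ⟨le_refl 1, by omega⟩
        have hz0 : ((((1:ℕ):ℝ)) - 1)/2 = 0 := by norm_num
        have hterm : t ^ ((((1:ℕ):ℝ) - 1)/2) * cut θ δ 1 x = 1 := by
          rw [hcut1 x hxδ, hz0, Real.rpow_zero, mul_one]
        rw [hSdef]
        calc (1:ℝ) = t ^ ((((1:ℕ):ℝ) - 1)/2) * cut θ δ 1 x := hterm.symm
          _ ≤ _ := Finset.single_le_sum (f := fun j : ℕ => t ^ (((j:ℝ) - 1)/2) * cut θ δ j x)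
              (fun j _ => mul_nonneg (Real.rpow_nonneg ht0.le _) (hθnn _)) h1m
      rw [hheq]
      nlinarith [mul_nonneg hR0 hS0, _root_.mul_pos ht0 hP0]
  have hAgeq : Acore ≤ A := by
    rw [hAdef]
    have h1 : 0 ≤ 2 * (C₁ ^ α⁻¹ * |CΨ|) := by positivity
    have h2 : 0 ≤ (N : ℝ) * |CΨ| * D := by positivity
    have h3 : 0 ≤ 2 * (E * D) := by positivity
    linarith only [h1, h2, h3]
  constructor
  · -- part (i)
    intro t ht x hx
    obtain ⟨hΘpos, hh0, hcore, hhge1⟩ := core t ht x hx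
    obtain ⟨ht0, htT⟩ := ht
    have htT₀ : t < T₀ := lt_of_lt_of_le htT (hTle.trans (min_le_right _ _))
    have hΨx01 := hΨ01 x
    have hΨabs : |Ψ x| ≤ 1 := abs_le.2 ⟨by linarith [hΨx01.1], hΨx01.2⟩
    have hbU : |Ψ x * U t x| ≤ |U t x| := by
      rw [abs_mul]
      exact mul_le_of_le_one_left (abs_nonneg _) hΨabs
    have hwb : |w t x| ≤ ThetaFun θ δ K m t x := hw t ⟨ht0, htT⟩ x hx
    have haM : |Ψ x * U t x + w t x| ≤ |U t x| + ThetaFun θ δ K m t x :=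
      (abs_add_le _ _).trans (add_le_add hbU hwb)
    have hbM : |Ψ x * U t x| ≤ |U t x| + ThetaFun θ δ K m t x := by
      linarith only [hbU, hΘpos]
    have hMnn : 0 ≤ |U t x| + ThetaFun θ δ K m t x :=
      add_nonneg (abs_nonneg _) hΘpos.le
    have hMα0 : 0 ≤ (α + 1) * (|U t x| + ThetaFun θ δ K m t x) ^ α :=
      mul_nonneg (by linarith) (Real.rpow_nonneg hMnn _)
    have hF := myMVF hα haM hbM
    rw [show Ψ x * U t x + w t x - Ψ x * U t x = w t x by ring] at hF
    have hF2 : |(|Ψ x * U t x + w t x| ^ α * (Ψ x * U t x + w t x) -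
        |Ψ x * U t x| ^ α * (Ψ x * U t x))| ≤
        (α + 1) * (|U t x| + ThetaFun θ δ K m t x) ^ α * ThetaFun θ δ K m t x := by
      calc |(|Ψ x * U t x + w t x| ^ α * (Ψ x * U t x + w t x) -
          |Ψ x * U t x| ^ α * (Ψ x * U t x))|
          ≤ (α + 1) * (|U t x| + ThetaFun θ δ K m t x) ^ α * |w t x| := hF
        _ ≤ (α + 1) * (|U t x| + ThetaFun θ δ K m t x) ^ α * ThetaFun θ δ K m t x :=
            mul_le_mul_of_nonneg_left hwb hMα0
    have hF3 : |(|Ψ x * U t x + w t x| ^ α * (Ψ x * U t x + w t x) -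
        |Ψ x * U t x| ^ α * (Ψ x * U t x))| ≤
        Acore * (1 + K ^ (α + 1)) * hFun θ δ m t x := le_trans hF2 hcore
    obtain ⟨Lx, hLx⟩ : ∃ v : ℝ, v = 2 * (inner ℝ (gradient (U t) x) (gradient Ψ x) : ℝ) +
        U t x * lap N Ψ x := ⟨_, rfl⟩
    obtain ⟨Fw, hFw⟩ : ∃ v : ℝ, v = |Ψ x * U t x + w t x| ^ α * (Ψ x * U t x + w t x) -
        |Ψ x * U t x| ^ α * (Ψ x * U t x) := ⟨_, rfl⟩
    obtain ⟨Cx, hCx⟩ : ∃ v : ℝ, v = |Ψ x * U t x| ^ α * (Ψ x * U t x) -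
        Ψ x * (|U t x| ^ α * U t x) := ⟨_, rfl⟩
    have hdec : Mop N α U Ψ w t x = Lx + Fw + Cx := by
      rw [hLx, hFw, hCx, Mop]; ring
    have hFw3 : |Fw| ≤ Acore * (1 + K ^ (α + 1)) * hFun θ δ m t x := by
      rw [hFw]; exact hF3
    have hKh0 : 0 ≤ (1 + K ^ (α + 1)) * hFun θ δ m t x := mul_nonneg (by linarith) hh0
    rcases lt_or_ge ‖x‖ δ with hxδ | hxδ
    · -- inside the ball: linear part and correction vanish
      have hg := hgradΨ0 x hxδ.le
      have hl := hlapΨ0 x hxδ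
      have hΨ1 := hΨball x hxδ
      have hL0 : Lx = 0 := by
        rw [hLx, hg, hl]
        simp
      have hC0 : Cx = 0 := by
        rw [hCx, hΨ1]
        simp only [one_mul]
        exact sub_self _
      rw [hdec, hL0, hC0, zero_add, add_zero]
      exact myFinal1 hFw3 hAgeq hKp0 hh0
    · -- outside the ball
      have hh1 := hhge1 hxδ
      have hUa0 : 0 ≤ |U t x| ^ α := Real.rpow_nonneg (abs_nonneg _) _
      have hRδ : ‖x‖ ^ (-(2:ℝ)) ≤ (δ ^ 2)⁻¹ := by
        rw [Real.rpow_neg (norm_nonneg x), show ((2:ℝ)) = ((2:ℕ):ℝ) by norm_num,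
          Real.rpow_natCast]
        exact inv_anti₀ (by positivity) (pow_le_pow_left₀ hδ.le hxδ 2)
      have hUE : |U t x| ^ α ≤ E := by
        rw [hEdef]
        calc |U t x| ^ α ≤ C₁ * min t⁻¹ (‖x‖ ^ (-(2:ℝ))) := hUbd t ⟨ht0, htT₀⟩ x hx
          _ ≤ C₁ * (‖x‖ ^ (-(2:ℝ))) := mul_le_mul_of_nonneg_left (min_le_right _ _) hC₁
          _ ≤ C₁ * (δ ^ 2)⁻¹ := mul_le_mul_of_nonneg_left hRδ hC₁
      have hUD : |U t x| ≤ D := hDdef ▸ myRootLe hα (abs_nonneg _) hUE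
      have hbαE : |Ψ x * U t x| ^ α ≤ E :=
        le_trans (Real.rpow_le_rpow (abs_nonneg _) hbU hα.le) hUE
      have hbD : |Ψ x * U t x| ≤ D := hbU.trans hUD
      have hcorr : |Cx| ≤ 2 * (E * D) := by
        rw [hCx]
        have h1 : |(|Ψ x * U t x| ^ α * (Ψ x * U t x))| ≤ E * D := by
          rw [abs_mul, abs_of_nonneg (Real.rpow_nonneg (abs_nonneg _) _)]
          exact mul_le_mul hbαE hbD (abs_nonneg _) hE0
        have h2 : |Ψ x * (|U t x| ^ α * U t x)| ≤ E * D := by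
          rw [abs_mul, abs_mul, abs_of_nonneg hUa0]
          calc |Ψ x| * (|U t x| ^ α * |U t x|) ≤ 1 * (E * D) :=
                mul_le_mul hΨabs (mul_le_mul hUE hUD (abs_nonneg _) hE0)
                  (mul_nonneg hUa0 (abs_nonneg _)) zero_le_one
            _ = E * D := one_mul _
        calc |(|Ψ x * U t x| ^ α * (Ψ x * U t x) - Ψ x * (|U t x| ^ α * U t x))|
            ≤ |(|Ψ x * U t x| ^ α * (Ψ x * U t x))| + |Ψ x * (|U t x| ^ α * U t x)| := by
              rw [sub_eq_add_neg]
              exact (abs_add_le _ _).trans (by rw [abs_neg])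
          _ ≤ 2 * (E * D) := by linarith only [h1, h2]
      have hgradU : |(inner ℝ (gradient (U t) x) (gradient Ψ x) : ℝ)| ≤ C₁ ^ α⁻¹ * |CΨ| := by
        rcases eq_or_lt_of_le hxδ with heq | hlt
        · rw [hgradΨ0 x heq.ge]
          simp only [inner_zero_right, abs_zero]
          positivity
        · have hgU := hUgrad t ⟨ht0, htT₀⟩ x hx hlt
          have h1 : ‖gradient (U t) x‖ ≤ C₁ ^ α⁻¹ := myRootLe hα (norm_nonneg _) hgU
          calc |(inner ℝ (gradient (U t) x) (gradient Ψ x) : ℝ)|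
              ≤ ‖gradient (U t) x‖ * ‖gradient Ψ x‖ := abs_real_inner_le_norm _ _
            _ ≤ C₁ ^ α⁻¹ * |CΨ| := mul_le_mul h1 (hCΨgrad x) (norm_nonneg _) hC₁r0
      have hlapb : |lap N Ψ x| ≤ (N : ℝ) * |CΨ| := by
        rw [lap]
        calc |∑ i : Fin N, iteratedFDeriv ℝ 2 Ψ x
              ![EuclideanSpace.single i 1, EuclideanSpace.single i 1]|
            ≤ ∑ i : Fin N, |iteratedFDeriv ℝ 2 Ψ x
              ![EuclideanSpace.single i 1, EuclideanSpace.single i 1]| :=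
              Finset.abs_sum_le_sum_abs _ _
          _ ≤ ∑ _i : Fin N, |CΨ| := by
              apply Finset.sum_le_sum
              intro i _
              have h1 := ContinuousMultilinearMap.le_opNorm (iteratedFDeriv ℝ 2 Ψ x)
                ![EuclideanSpace.single i 1, EuclideanSpace.single i 1]
              have h2 : (∏ k : Fin 2, ‖(![EuclideanSpace.single i (1:ℝ),
                  EuclideanSpace.single i 1] :
                  Fin 2 → EuclideanSpace ℝ (Fin N)) k‖) = 1 := by
                rw [Fin.prod_univ_two]
                simp [EuclideanSpace.norm_single]
              rw [h2, mul_one, Real.norm_eq_abs] at h1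
              exact h1.trans (hCΨ2 x)
          _ = (N : ℝ) * |CΨ| := by
              simp [Finset.sum_const, Finset.card_univ, nsmul_eq_mul]
      have hLb : |Lx| ≤ 2 * (C₁ ^ α⁻¹ * |CΨ|) + D * ((N : ℝ) * |CΨ|) := by
        rw [hLx]
        calc |2 * (inner ℝ (gradient (U t) x) (gradient Ψ x) : ℝ) + U t x * lap N Ψ x|
            ≤ |2 * (inner ℝ (gradient (U t) x) (gradient Ψ x) : ℝ)| +
              |U t x * lap N Ψ x| := abs_add_le _ _
          _ = 2 * |(inner ℝ (gradient (U t) x) (gradient Ψ x) : ℝ)| +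
              |U t x| * |lap N Ψ x| := by rw [abs_mul, abs_mul, abs_two]
          _ ≤ 2 * (C₁ ^ α⁻¹ * |CΨ|) + D * ((N : ℝ) * |CΨ|) := by
              have h3 := mul_le_mul hUD hlapb (abs_nonneg _) hD0
              linarith only [h3, mul_le_mul_of_nonneg_left hgradU (by norm_num : (0:ℝ) ≤ 2)]
      have hB : 2 * (C₁ ^ α⁻¹ * |CΨ|) + D * ((N : ℝ) * |CΨ|) + 2 * (E * D) = A - 1 - Acore := by
        rw [hAdef]; ring
      have hB0 : 0 ≤ 2 * (C₁ ^ α⁻¹ * |CΨ|) + D * ((N : ℝ) * |CΨ|) + 2 * (E * D) := by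
        positivity
      have htri : |Mop N α U Ψ w t x| ≤ |Lx| + |Fw| + |Cx| := by
        rw [hdec]
        exact (abs_add_le _ _).trans (add_le_add_left (abs_add_le _ _) _)
      have hLC : |Lx| + |Cx| ≤ 2 * (C₁ ^ α⁻¹ * |CΨ|) + D * ((N : ℝ) * |CΨ|) + 2 * (E * D) := by
        linarith only [hLb, hcorr]
      exact myFinal3 htri hLC hB hB0 hFw3 hKp0 hh1
  · -- part (ii)
    intro t ht x hx
    obtain ⟨hΘpos, hh0, hcore, _⟩ := core t ht x hx
    obtain ⟨ht0, htT⟩ := ht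
    have hΨx01 := hΨ01 x
    have hΨabs : |Ψ x| ≤ 1 := abs_le.2 ⟨by linarith [hΨx01.1], hΨx01.2⟩
    have hbU : |Ψ x * U t x| ≤ |U t x| := by
      rw [abs_mul]
      exact mul_le_of_le_one_left (abs_nonneg _) hΨabs
    have hwb : |w t x| ≤ ThetaFun θ δ K m t x := hw t ⟨ht0, htT⟩ x hx
    have hzb : |z t x| ≤ ThetaFun θ δ K m t x := hz t ⟨ht0, htT⟩ x hx
    have haM : |Ψ x * U t x + w t x| ≤ |U t x| + ThetaFun θ δ K m t x :=
      (abs_add_le _ _).trans (add_le_add hbU hwb)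
    have hcM : |Ψ x * U t x + z t x| ≤ |U t x| + ThetaFun θ δ K m t x :=
      (abs_add_le _ _).trans (add_le_add hbU hzb)
    have hF := myMVF hα haM hcM
    rw [show Ψ x * U t x + w t x - (Ψ x * U t x + z t x) = w t x - z t x by ring] at hF
    have hdiff : Mop N α U Ψ w t x - Mop N α U Ψ z t x =
        |Ψ x * U t x + w t x| ^ α * (Ψ x * U t x + w t x) -
        |Ψ x * U t x + z t x| ^ α * (Ψ x * U t x + z t x) := by
      rw [Mop, Mop]; ring
    have hq : |w t x - z t x| =
        |(w t x - z t x) / ThetaFun θ δ K m t x| * ThetaFun θ δ K m t x := by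
      rw [abs_div, abs_of_pos hΘpos, div_mul_cancel₀ _ hΘpos.ne']
    have hq0 : 0 ≤ |(w t x - z t x) / ThetaFun θ δ K m t x| := abs_nonneg _
    rw [hdiff]
    calc |(|Ψ x * U t x + w t x| ^ α * (Ψ x * U t x + w t x) -
        |Ψ x * U t x + z t x| ^ α * (Ψ x * U t x + z t x))|
        ≤ (α + 1) * (|U t x| + ThetaFun θ δ K m t x) ^ α * |w t x - z t x| := hF
      _ = (α + 1) * (|U t x| + ThetaFun θ δ K m t x) ^ α * ThetaFun θ δ K m t x *
          |(w t x - z t x) / ThetaFun θ δ K m t x| := by rw [hq]; ring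
      _ ≤ Acore * (1 + K ^ (α + 1)) * hFun θ δ m t x *
          |(w t x - z t x) / ThetaFun θ δ K m t x| :=
          mul_le_mul_of_nonneg_right hcore hq0
      _ ≤ A * (1 + K ^ (α + 1)) * |(w t x - z t x) / ThetaFun θ δ K m t x| *
          hFun θ δ m t x := myFinal2 (le_refl _) hAgeq hKp0 hh0 hq0
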